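/- In the formal power series ring $\mathbb{Q}[[x,Q]]$, the double series $-\sum_{j,k\ge0,\,j+k>0} x^{j+k}\frac{(k+2j-1)!}{j!\,j!\,k!}Q^j$ equals $\log(1-x) - \sum_{j=1}^{\infty}\frac{(2j-1)!}{j!\,j!}\frac{(Qx)^j}{(1-x)^{2j}}$. -/

import Mathlib

open PowerSeries Finset

/-- The inner ring `ℚ[[Q]]`. -/
noncomputable abbrev RQ : Type := PowerSeries ℚ

/-- The variable `Q`. -/
noncomputable def QQ : RQ := PowerSeries.X

/-- The double series `-∑_{j,k≥0, j+k>0} x^{j+k} (k+2j-1)!/(j!j!k!) Q^j`,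
as an element of `ℚ[[Q]][[x]]` (the coefficient of `x^n` collects the pairs
`(j,k)` with `j+k = n`; for `j = 0` the factor `(k-1)!/k!` equals `1/k`). -/
noncomputable def lhsSeries : PowerSeries RQ :=
  PowerSeries.mk fun n =>
    -∑ p ∈ Finset.HasAntidiagonal.antidiagonal n,
      if 0 < p.1 + p.2 then
        PowerSeries.C (R := ℚ) (((p.2 + 2 * p.1 - 1).factorial : ℚ) /
          ((p.1.factorial : ℚ) ^ 2 * (p.2.factorial : ℚ))) * QQ ^ p.1
      else 0

/-- `log(1-x) = -∑_{n≥1} x^n/n`. -/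
noncomputable def logOneSubX : PowerSeries RQ :=
  PowerSeries.mk fun n => PowerSeries.C (R := ℚ) (if n = 0 then 0 else -(1 / (n : ℚ)))

/-- The `j`-th term `(2j-1)!/(j!j!) · (Qx)^j/(1-x)^{2j}`, with
`1/(1-x)^{2j} = ∑_{k≥0} C(2j+k-1, k) x^k`. -/
noncomputable def termSeries (j : ℕ) : PowerSeries RQ :=
  PowerSeries.C (R := RQ) (PowerSeries.C (R := ℚ) (((2 * j - 1).factorial : ℚ) / ((j.factorial : ℚ) ^ 2))) *
    PowerSeries.C (R := RQ) (QQ ^ j) * PowerSeries.X ^ j *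
    PowerSeries.mk fun k => ((2 * j + k - 1).choose k : RQ)

/-!
Expanding `1/(1-x)^{2j} = ∑_k C(2j+k-1, k) x^k`, the coefficient of `x^n` in the `j`-th term is
`(2j-1)!/(j!)² · C(n+j-1, n-j) Q^j = (n+j-1)!/((j!)² (n-j)!) Q^j`, which is exactly the
`(j, n-j)` summand of the double series. The remaining summand `j = 0` is `(n-1)!/n! = 1/n`,
the coefficient of `-log(1-x)`.
-/

open Nat

noncomputable def doubleCoeff (j k : ℕ) : RQ :=
  C (((k + 2 * j - 1)! : ℚ) / ((j ! : ℚ) ^ 2 * (k ! : ℚ))) * QQ ^ j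

lemma coeff_lhsSeries {n : ℕ} (hn : 0 < n) :
    coeff n lhsSeries = -∑ j ∈ range (n + 1), doubleCoeff j (n - j) := by
  rw [lhsSeries, coeff_mk, Nat.sum_antidiagonal_eq_sum_range_succ_mk]
  congr 1
  refine sum_congr rfl fun j _ => ?_
  rw [if_pos (by omega)]
  rfl

lemma coeff_logOneSubX {n : ℕ} (hn : 0 < n) : coeff n logOneSubX = -C (1 / (n : ℚ)) := by
  simp [logOneSubX, hn.ne']

lemma doubleCoeff_zero {k : ℕ} (hk : 0 < k) : doubleCoeff 0 k = C (1 / (k : ℚ)) := by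
  have hfac : ((k - 1)! : ℚ) / k ! = 1 / k := by
    rw [← Nat.mul_factorial_pred hk.ne', Nat.cast_mul]
    field_simp
  simp [doubleCoeff, hfac]

lemma factorial_div_mul_add_choose {K : Type*} [Field K] [CharZero K] (a b : ℕ) (c : K) :
    (b ! : K) / c * (a + b).choose a = (a + b)! / (c * a !) := by
  have hb : (b ! : K) ≠ 0 := Nat.cast_ne_zero.2 b.factorial_ne_zero
  rw [Nat.cast_add_choose]
  field_simp

lemma coeff_termSeries {n j : ℕ} (hj : 1 ≤ j) (hjn : j ≤ n) :
    coeff n (termSeries j) = doubleCoeff j (n - j) := by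
  have hsplit : termSeries j = C (C (((2 * j - 1)! : ℚ) / (j ! : ℚ) ^ 2) * QQ ^ j) *
      (X ^ j * PowerSeries.mk fun k => ((2 * j + k - 1).choose k : RQ)) := by
    rw [termSeries, map_mul]
    ring
  obtain ⟨k, rfl⟩ := Nat.exists_eq_add_of_le hjn
  have hk : 2 * j + k - 1 = k + (2 * j - 1) := by omega
  have hk' : k + 2 * j - 1 = k + (2 * j - 1) := by omega
  rw [hsplit, coeff_C_mul, coeff_X_pow_mul', if_pos hjn, coeff_mk, Nat.add_sub_cancel_left, hk,
    doubleCoeff, hk', ← map_natCast (C (R := ℚ)), mul_right_comm, ← map_mul,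
    factorial_div_mul_add_choose]

/-- The double series `-∑_{j,k≥0, j+k>0} x^{j+k} (k+2j-1)!/(j!j!k!) Q^j` equals
`log(1-x) - ∑_{j≥1} (2j-1)!/(j!j!) (Qx)^j/(1-x)^{2j}` (coefficientwise; since
the `j`-th term is divisible by `x^j`, only `j ≤ n` contribute to the `x^n`
coefficient). -/
theorem double_series_eq_log_sub_sum (n : ℕ) :
    PowerSeries.coeff (R := RQ) n lhsSeries
      = PowerSeries.coeff (R := RQ) n (logOneSubX - ∑ j ∈ Finset.Icc 1 n, termSeries j) := by
  rcases Nat.eq_zero_or_pos n with rfl | hn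
  · simp [lhsSeries, logOneSubX]
  have hterms : ∑ j ∈ Icc 1 n, coeff n (termSeries j) = ∑ j ∈ Icc 1 n, doubleCoeff j (n - j) :=
    sum_congr rfl fun j hj => coeff_termSeries (mem_Icc.1 hj).1 (mem_Icc.1 hj).2
  rw [map_sub, map_sum, hterms, coeff_lhsSeries hn, sum_range_eq_add_Ico _ (add_one_pos n),
    Ico_add_one_right_eq_Icc, Nat.sub_zero, doubleCoeff_zero hn, coeff_logOneSubX hn]
  ring
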